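/- Fix natural numbers n ≥ 1 and ε, data y : ZMod n → ℝ, and λ ≥ 0. A strategy profile (f, c) with f, c : ZMod n → ℝ is a Nash equilibrium of the symmetric co-operative game if and only if c = A f (i.e., c(t) = (A f)(t) for every t) and f = (1/(1+λ)) · (y + λ · A² f), where A² = A ∘ A. Thus at a symmetric-game equilibrium the predictor satisfies the same fixed-point recursion as in the asymmetric game but with the convolutional kernel A replaced by A², i.e., the kernel evolves twice as fast per recursion while the decay rate λ/(1+λ) is unchanged. -/

import Mathlib

/-! The explainer's problem at `t` is a least-squares fit of a constant to the window values
`f (t + s)`, so its minimizer is their mean, `c = A f`. In the shared objective the substitution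
`u = t + s` moves the shift from `f'` onto `c`, after which the objective separates into one
quadratic in `f' t` per `t`; its minimizer satisfies `(1 + λ) f t = y t + λ (A c) t`, the window
being symmetric. Substituting `c = A f` gives the `A²` recursion. -/

/-- The window-averaging operator `A` on functions `ZMod n → ℝ`:
`(A f)(t) = (1/(2ε+1)) · ∑_{s = -ε}^{ε} f(t + s)`. -/
noncomputable def winAvg (n ε : ℕ) (f : ZMod n → ℝ) : ZMod n → ℝ :=
  fun t => (1 / (2 * (ε : ℝ) + 1)) * ∑ s ∈ Finset.Icc (-(ε : ℤ)) (ε : ℤ), f (t + (s : ZMod n))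

/-- Nash equilibrium of the symmetric co-operative game: (i) each constant
explainer `c t` minimizes the local deviation `∑_{s=-ε}^{ε} (f(t+s) - γ)²`;
(ii) `f` minimizes the shared objective
`∑_t [(f'(t) - y(t))² + (λ/(2ε+1)) ∑_{s=-ε}^{ε} (f'(t+s) - c(t))²]`. -/
def SymEquilibrium (n ε : ℕ) [NeZero n] (y : ZMod n → ℝ) (lam : ℝ)
    (f c : ZMod n → ℝ) : Prop :=
  (∀ t : ZMod n, ∀ γ : ℝ,
    ∑ s ∈ Finset.Icc (-(ε : ℤ)) (ε : ℤ), (f (t + (s : ZMod n)) - c t) ^ 2 ≤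
    ∑ s ∈ Finset.Icc (-(ε : ℤ)) (ε : ℤ), (f (t + (s : ZMod n)) - γ) ^ 2) ∧
  (∀ f' : ZMod n → ℝ,
    ∑ t : ZMod n, ((f t - y t) ^ 2 +
      (lam / (2 * (ε : ℝ) + 1)) *
        ∑ s ∈ Finset.Icc (-(ε : ℤ)) (ε : ℤ), (f (t + (s : ZMod n)) - c t) ^ 2) ≤
    ∑ t : ZMod n, ((f' t - y t) ^ 2 +
      (lam / (2 * (ε : ℝ) + 1)) *
        ∑ s ∈ Finset.Icc (-(ε : ℤ)) (ε : ℤ), (f' (t + (s : ZMod n)) - c t) ^ 2))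

open Finset

lemma forall_quadratic_le_iff {a b C x : ℝ} (ha : 0 < a) :
    (∀ γ, a * x ^ 2 - 2 * b * x + C ≤ a * γ ^ 2 - 2 * b * γ + C) ↔ a * x = b := by
  refine ⟨fun h => ?_, fun hx γ => ?_⟩
  · have hmin := h (b / a)
    field_simp at hmin
    nlinarith [sq_nonneg (a * x - b)]
  · subst hx
    nlinarith [mul_nonneg ha.le (sq_nonneg (γ - x))]

lemma sum_sub_sq_eq {ι : Type*} (W : Finset ι) (v : ι → ℝ) (x : ℝ) :
    ∑ s ∈ W, (v s - x) ^ 2 = #W * x ^ 2 - 2 * (∑ s ∈ W, v s) * x + ∑ s ∈ W, v s ^ 2 := by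
  simp only [sub_sq, sum_add_distrib, sum_sub_distrib, sum_const, nsmul_eq_mul, ← sum_mul,
    ← mul_sum]
  ring

lemma forall_sum_sub_sq_le_iff {ι : Type*} {W : Finset ι} (hW : W.Nonempty) (v : ι → ℝ) (x : ℝ) :
    (∀ γ, ∑ s ∈ W, (v s - x) ^ 2 ≤ ∑ s ∈ W, (v s - γ) ^ 2) ↔ #W * x = ∑ s ∈ W, v s := by
  simp only [sum_sub_sq_eq]
  exact forall_quadratic_le_iff (by exact_mod_cast hW.card_pos)

lemma forall_sq_add_mul_sum_sq_le_iff {ι : Type*} (W : Finset ι) {κ : ℝ} (hκ : 0 ≤ κ)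
    (p : ℝ) (q : ι → ℝ) (x : ℝ) :
    (∀ γ, (x - p) ^ 2 + κ * ∑ s ∈ W, (x - q s) ^ 2 ≤ (γ - p) ^ 2 + κ * ∑ s ∈ W, (γ - q s) ^ 2) ↔
      (1 + κ * #W) * x = p + κ * ∑ s ∈ W, q s := by
  have hexp : ∀ γ, (γ - p) ^ 2 + κ * ∑ s ∈ W, (γ - q s) ^ 2 =
      (1 + κ * #W) * γ ^ 2 - 2 * (p + κ * ∑ s ∈ W, q s) * γ + (p ^ 2 + κ * ∑ s ∈ W, q s ^ 2) := by
    intro γ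
    simp only [sub_sq_comm γ, sum_sub_sq_eq]
    ring
  simp only [hexp]
  exact forall_quadratic_le_iff (by positivity)

lemma forall_sum_apply_le_iff {ι α M : Type*} [Fintype ι] [AddCommMonoid M] [PartialOrder M]
    [IsOrderedCancelAddMonoid M] (φ : ι → α → M) (f : ι → α) :
    (∀ g : ι → α, ∑ i, φ i (f i) ≤ ∑ i, φ i (g i)) ↔ ∀ i x, φ i (f i) ≤ φ i x := by
  classical
  refine ⟨fun h i x => ?_, fun h g => sum_le_sum fun i _ => h i (g i)⟩
  have hupd := h (Function.update f i x)
  simp only [Function.apply_update (fun j => φ j), sum_update_of_mem (mem_univ i)] at hupd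
  rwa [← add_sum_erase _ _ (mem_univ i), ← sdiff_singleton_eq_erase, add_le_add_iff_right] at hupd

lemma sum_sum_add_eq_sum_sum_sub {G ι M : Type*} [AddGroup G] [Fintype G] [AddCommMonoid M]
    (W : Finset ι) (e : ι → G) (F : G → G → M) :
    ∑ t, ∑ s ∈ W, F (t + e s) t = ∑ t, ∑ s ∈ W, F t (t - e s) := by
  rw [sum_comm, sum_comm (s := univ)]
  refine sum_congr rfl fun s _ => Fintype.sum_equiv (Equiv.addRight (e s)) _ _ fun t => ?_
  simp

lemma sum_Icc_neg_comp {α M : Type*} [AddCommGroup α] [LinearOrder α] [IsOrderedAddMonoid α]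
    [LocallyFiniteOrder α] [AddCommMonoid M] (a : α) (h : α → M) :
    ∑ s ∈ Icc (-a) a, h (-s) = ∑ s ∈ Icc (-a) a, h s :=
  sum_equiv (Equiv.neg α) (fun s => by simp [neg_le, and_comm]) fun s _ => by simp

lemma Int.card_Icc_neg_natCast_self (ε : ℕ) : #(Icc (-(ε : ℤ)) ε) = 2 * ε + 1 := by
  rw [Int.card_Icc]
  omega

/-- Clause (ii) of `SymEquilibrium` says, definitionally, that `f` minimizes this. -/
noncomputable def sharedObjective (n ε : ℕ) [NeZero n] (y : ZMod n → ℝ) (lam : ℝ)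
    (c g : ZMod n → ℝ) : ℝ :=
  ∑ t : ZMod n, ((g t - y t) ^ 2 +
    (lam / (2 * (ε : ℝ) + 1)) * ∑ s ∈ Icc (-(ε : ℤ)) (ε : ℤ), (g (t + (s : ZMod n)) - c t) ^ 2)

section Window

variable {n ε : ℕ}

lemma winAvg_eq_sum_sub (f : ZMod n → ℝ) (t : ZMod n) :
    winAvg n ε f t = 1 / (2 * (ε : ℝ) + 1) * ∑ s ∈ Icc (-(ε : ℤ)) ε, f (t - s) := by
  rw [winAvg, ← sum_Icc_neg_comp]
  simp [sub_eq_add_neg]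

lemma forall_sum_window_sub_sq_le_iff (f : ZMod n → ℝ) (t : ZMod n) (x : ℝ) :
    (∀ γ, ∑ s ∈ Icc (-(ε : ℤ)) ε, (f (t + s) - x) ^ 2 ≤
        ∑ s ∈ Icc (-(ε : ℤ)) ε, (f (t + s) - γ) ^ 2) ↔ x = winAvg n ε f t := by
  rw [forall_sum_sub_sq_le_iff (nonempty_Icc.2 (by omega)), Int.card_Icc_neg_natCast_self, winAvg,
    one_div_mul_eq_div, eq_div_iff (by positivity), mul_comm]
  norm_cast

variable [NeZero n]

lemma sharedObjective_eq_sum_sub (y : ZMod n → ℝ) (lam : ℝ) (c g : ZMod n → ℝ) :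
    sharedObjective n ε y lam c g = ∑ t : ZMod n, ((g t - y t) ^ 2 +
      (lam / (2 * (ε : ℝ) + 1)) * ∑ s ∈ Icc (-(ε : ℤ)) ε, (g t - c (t - s)) ^ 2) := by
  rw [sharedObjective, sum_add_distrib, sum_add_distrib, ← mul_sum, ← mul_sum,
    sum_sum_add_eq_sum_sum_sub _ (fun s : ℤ => (s : ZMod n)) fun u t => (g u - c t) ^ 2]

lemma forall_sharedObjective_le_iff (y : ZMod n → ℝ) {lam : ℝ} (hlam : 0 ≤ lam)
    (c f : ZMod n → ℝ) :
    (∀ g, sharedObjective n ε y lam c f ≤ sharedObjective n ε y lam c g) ↔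
      ∀ t, (1 + lam) * f t = y t + lam * winAvg n ε c t := by
  have hN : (0 : ℝ) < 2 * ε + 1 := by positivity
  simp only [sharedObjective_eq_sum_sub]
  rw [forall_sum_apply_le_iff (fun t x => (x - y t) ^ 2 + (lam / (2 * (ε : ℝ) + 1)) *
    ∑ s ∈ Icc (-(ε : ℤ)) ε, (x - c (t - s)) ^ 2) f]
  refine forall_congr' fun t => ?_
  rw [forall_sq_add_mul_sum_sq_le_iff _ (by positivity), Int.card_Icc_neg_natCast_self,
    winAvg_eq_sum_sub]
  push_cast
  rw [div_mul_cancel₀ _ hN.ne', div_eq_mul_one_div, mul_assoc]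

end Window

/-- `(f, c)` is a Nash equilibrium of the symmetric co-operative game
iff `c = A f` and `f = (1/(1+λ)) · (y + λ · A² f)` where `A² = A ∘ A`: the same
fixed-point recursion as the asymmetric game with kernel `A` replaced by `A²`. -/
theorem symmetric_equilibrium_characterization (n ε : ℕ) [NeZero n]
    (y : ZMod n → ℝ) (lam : ℝ) (hlam : 0 ≤ lam) :
    ∀ f c : ZMod n → ℝ,
      SymEquilibrium n ε y lam f c ↔
      ((∀ t : ZMod n, c t = winAvg n ε f t) ∧
       (∀ t : ZMod n,
         f t = (1 / (1 + lam)) * (y t + lam * (winAvg n ε ∘ winAvg n ε) f t))) := by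
  intro f c
  refine (and_congr (forall_congr' fun t => forall_sum_window_sub_sq_le_iff f t (c t))
    (forall_sharedObjective_le_iff y hlam c f)).trans (and_congr_right fun hc => ?_)
  obtain rfl : c = winAvg n ε f := funext hc
  refine forall_congr' fun t => ?_
  rw [Function.comp_apply, one_div_mul_eq_div, eq_div_iff (by positivity), mul_comm]
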